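/- Let Ω ⊆ ℝ² be open with coordinates (x,u) and let F : Ω → ℝ be smooth with ∂_x∂_u F(x₀,u₀) ≠ 0 at a point (x₀,u₀) ∈ Ω. Define I[F] at a point as ((F_{uux} − 2·F_u·F_{ux})·(F_x·F_{ux} + F_{uxx}))/F_{ux}³, where subscripts denote partial derivatives. Let α, β : ℝ → ℝ be smooth near x₀ and u₀ respectively with α'(x₀) ≠ 0 and β'(u₀) ≠ 0, and let C₁ ∈ ℝ satisfy C₁·β'(u)/α'(x)² > 0 for all (x,u) near (x₀,u₀). Suppose F̃ is a smooth function on a neighborhood of (α(x₀), β(u₀)) such that F̃(α(x), β(u)) = F(x,u) − ½·ln(C₁·β'(u)/α'(x)²) for all (x,u) near (x₀,u₀). Then F̃_{ux}(α(x₀), β(u₀)) ≠ 0 and I[F̃](α(x₀), β(u₀)) = I[F](x₀, u₀). -/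

import Mathlib

/-- Partial derivative in the `x`-direction (first coordinate). -/
noncomputable def pdX (f : ℝ × ℝ → ℝ) (p : ℝ × ℝ) : ℝ := fderiv ℝ f p (1, 0)

/-- Partial derivative in the `u`-direction (second coordinate). -/
noncomputable def pdU (f : ℝ × ℝ → ℝ) (p : ℝ × ℝ) : ℝ := fderiv ℝ f p (0, 1)

/-- `I[F] = ((F_{uux} − 2F_uF_{ux})·(F_xF_{ux} + F_{uxx}))/F_{ux}³`. -/
noncomputable def inv9 (F : ℝ × ℝ → ℝ) (p : ℝ × ℝ) : ℝ :=
  ((pdX (pdU (pdU F)) p - 2 * pdU F p * pdX (pdU F) p) *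
      (pdX F p * pdX (pdU F) p + pdX (pdX (pdU F)) p)) /
    (pdX (pdU F) p) ^ 3

open Filter Topology
open scoped ContDiff

/-! Near `(x₀, u₀)`, `Ft ∘ (α × β)` agrees with `F + a(x) + b(u)`, where `a = ½ log α'²` and
`b = -½ log (C₁ β')`: the logarithm of the quotient splits. Both sides transform the five
partial derivatives entering `I` explicitly. The chain rule multiplies them by `α'` and `β'`,
with correction terms in `α''` and `β''` in the third-order ones, while adding `a(x) + b(u)`
shifts only `F_x` and `F_u`, by `α''/α'` and `-β''/(2β')`. Substituting, the numerator and the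
denominator of `I` both acquire the factor `(α'β')³`. -/

lemma ContDiffAt.eventually_differentiableAt {𝕜 E F : Type*} [NontriviallyNormedField 𝕜]
    [NormedAddCommGroup E] [NormedSpace 𝕜 E] [NormedAddCommGroup F] [NormedSpace 𝕜 F]
    {f : E → F} {x : E} {n : WithTop ℕ∞} (hf : ContDiffAt 𝕜 n f x) (hn : n ≠ 0) :
    ∀ᶠ y in 𝓝 x, DifferentiableAt 𝕜 f y :=
  ((hf.of_le (ENat.one_le_iff_ne_zero_withTop.mpr hn)).eventually (by simp)).mono
    fun _ hy => hy.differentiableAt one_ne_zero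

section PartialDerivatives

variable {f g : ℝ × ℝ → ℝ} {p : ℝ × ℝ}

lemma pdX_add (hf : DifferentiableAt ℝ f p) (hg : DifferentiableAt ℝ g p) :
    pdX (fun q => f q + g q) p = pdX f p + pdX g p := by
  simp [pdX, fderiv_fun_add hf hg]

lemma pdU_add (hf : DifferentiableAt ℝ f p) (hg : DifferentiableAt ℝ g p) :
    pdU (fun q => f q + g q) p = pdU f p + pdU g p := by
  simp [pdU, fderiv_fun_add hf hg]

lemma pdX_mul (hf : DifferentiableAt ℝ f p) (hg : DifferentiableAt ℝ g p) :
    pdX (fun q => f q * g q) p = pdX f p * g p + f p * pdX g p := by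
  simp only [pdX, fderiv_fun_mul hf hg, add_apply, smul_apply, smul_eq_mul]
  ring

lemma pdU_mul (hf : DifferentiableAt ℝ f p) (hg : DifferentiableAt ℝ g p) :
    pdU (fun q => f q * g q) p = pdU f p * g p + f p * pdU g p := by
  simp only [pdU, fderiv_fun_mul hf hg, add_apply, smul_apply, smul_eq_mul]
  ring

lemma pdX_comp_prodMap {α β : ℝ → ℝ} (hf : DifferentiableAt ℝ f (α p.1, β p.2))
    (hα : DifferentiableAt ℝ α p.1) (hβ : DifferentiableAt ℝ β p.2) :
    pdX (fun q => f (α q.1, β q.2)) p = pdX f (α p.1, β p.2) * deriv α p.1 := by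
  have h := hf.hasFDerivAt.comp p (hα.hasDerivAt.hasFDerivAt.prodMap p hβ.hasDerivAt.hasFDerivAt)
  have hv : ((deriv α p.1, 0) : ℝ × ℝ) = deriv α p.1 • (1, 0) := by simp
  simp only [pdX]
  rw [show (fun q : ℝ × ℝ => f (α q.1, β q.2)) = f ∘ Prod.map α β from rfl, h.fderiv]
  simp only [ContinuousLinearMap.comp_apply, ContinuousLinearMap.coe_prodMap', Prod.map_apply,
    ContinuousLinearMap.toSpanSingleton_apply, smul_eq_mul, one_mul, zero_mul]
  rw [hv, map_smul, smul_eq_mul, mul_comm]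

lemma pdU_comp_prodMap {α β : ℝ → ℝ} (hf : DifferentiableAt ℝ f (α p.1, β p.2))
    (hα : DifferentiableAt ℝ α p.1) (hβ : DifferentiableAt ℝ β p.2) :
    pdU (fun q => f (α q.1, β q.2)) p = pdU f (α p.1, β p.2) * deriv β p.2 := by
  have h := hf.hasFDerivAt.comp p (hα.hasDerivAt.hasFDerivAt.prodMap p hβ.hasDerivAt.hasFDerivAt)
  have hv : ((0, deriv β p.2) : ℝ × ℝ) = deriv β p.2 • (0, 1) := by simp
  simp only [pdU]
  rw [show (fun q : ℝ × ℝ => f (α q.1, β q.2)) = f ∘ Prod.map α β from rfl, h.fderiv]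
  simp only [ContinuousLinearMap.comp_apply, ContinuousLinearMap.coe_prodMap', Prod.map_apply,
    ContinuousLinearMap.toSpanSingleton_apply, smul_eq_mul, one_mul, zero_mul]
  rw [hv, map_smul, smul_eq_mul, mul_comm]

lemma pdX_comp_fst {a : ℝ → ℝ} (ha : DifferentiableAt ℝ a p.1) :
    pdX (fun q => a q.1) p = deriv a p.1 := by
  simp [pdX, fderiv_fun_comp p ha differentiableAt_fst, fderiv_fst]

lemma pdU_comp_fst {a : ℝ → ℝ} (ha : DifferentiableAt ℝ a p.1) :
    pdU (fun q => a q.1) p = 0 := by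
  simp [pdU, fderiv_fun_comp p ha differentiableAt_fst, fderiv_fst]

lemma pdX_comp_snd {b : ℝ → ℝ} (hb : DifferentiableAt ℝ b p.2) :
    pdX (fun q => b q.2) p = 0 := by
  simp [pdX, fderiv_fun_comp p hb differentiableAt_snd, fderiv_snd]

lemma pdU_comp_snd {b : ℝ → ℝ} (hb : DifferentiableAt ℝ b p.2) :
    pdU (fun q => b q.2) p = deriv b p.2 := by
  simp [pdU, fderiv_fun_comp p hb differentiableAt_snd, fderiv_snd]

lemma Filter.EventuallyEq.pdX (h : f =ᶠ[𝓝 p] g) : pdX f =ᶠ[𝓝 p] pdX g :=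
  (h.fderiv (𝕜 := ℝ)).mono fun _ hq => by simp only [_root_.pdX, hq]

lemma Filter.EventuallyEq.pdU (h : f =ᶠ[𝓝 p] g) : pdU f =ᶠ[𝓝 p] pdU g :=
  (h.fderiv (𝕜 := ℝ)).mono fun _ hq => by simp only [_root_.pdU, hq]

lemma Filter.EventuallyEq.pdX_eq (h : f =ᶠ[𝓝 p] g) : _root_.pdX f p = _root_.pdX g p :=
  h.pdX.self_of_nhds

lemma ContDiffAt.pdX {m n : WithTop ℕ∞} (hf : ContDiffAt ℝ n f p) (hmn : m + 1 ≤ n) :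
    ContDiffAt ℝ m (pdX f) p :=
  (hf.fderiv_right hmn).clm_apply contDiffAt_const

lemma ContDiffAt.pdU {m n : WithTop ℕ∞} (hf : ContDiffAt ℝ n f p) (hmn : m + 1 ≤ n) :
    ContDiffAt ℝ m (pdU f) p :=
  (hf.fderiv_right hmn).clm_apply contDiffAt_const

end PartialDerivatives

/-- The partial derivatives entering `inv9`, named as in the paper: `uux` is `F_{uux}`,
i.e. `pdX (pdU (pdU F))`. -/
@[ext]
structure Jet where
  x : ℝ
  u : ℝ
  ux : ℝ
  uux : ℝ
  uxx : ℝ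

namespace Jet

noncomputable def inv (j : Jet) : ℝ := ((j.uux - 2 * j.u * j.ux) * (j.x * j.ux + j.uxx)) / j.ux ^ 3

/-- The chain rule for `F ∘ (α × β)`, with `a, a₂` and `b, b₂` the first two derivatives
of `α` and `β`. -/
def reparam (j : Jet) (a a₂ b b₂ : ℝ) : Jet where
  x := j.x * a
  u := j.u * b
  ux := j.ux * a * b
  uux := j.uux * a * b ^ 2 + j.ux * a * b₂
  uxx := j.uxx * a ^ 2 * b + j.ux * a₂ * b

def shift (j : Jet) (c d : ℝ) : Jet := { j with x := j.x + c, u := j.u + d }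

/- The shifts `a₂ / a` and `-(b₂ / (2 * b))` are the derivatives of `½ log α'²` and
`-½ log (C₁ β')`. -/
lemma inv_eq_of_reparam_eq_shift {j k : Jet} {a a₂ b b₂ : ℝ} (ha : a ≠ 0) (hb : b ≠ 0)
    (h : j.reparam a a₂ b b₂ = k.shift (a₂ / a) (-(b₂ / (2 * b)))) : j.inv = k.inv := by
  simp only [reparam, shift, Jet.mk.injEq] at h
  obtain ⟨hx, hu, hux, huux, huxx⟩ := h
  replace hx : k.x = j.x * a - a₂ / a := by linarith
  replace hu : k.u = j.u * b + b₂ / (2 * b) := by linarith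
  replace hux : k.ux = a * b * j.ux := by linarith
  have hnum : (k.uux - 2 * k.u * k.ux) * (k.x * k.ux + k.uxx) =
      (a * b) ^ 3 * ((j.uux - 2 * j.u * j.ux) * (j.x * j.ux + j.uxx)) := by
    rw [hx, hu, hux, ← huux, ← huxx]
    field_simp
    ring
  rw [inv, inv, hnum, hux, mul_pow (a * b),
    mul_div_mul_left _ _ (pow_ne_zero 3 (mul_ne_zero ha hb))]

lemma ux_ne_zero_of_reparam_eq_shift {j k : Jet} {a a₂ b b₂ c d : ℝ}
    (h : j.reparam a a₂ b b₂ = k.shift c d) (hk : k.ux ≠ 0) : j.ux ≠ 0 := by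
  have hux : j.ux * a * b = k.ux := congrArg Jet.ux h
  rintro h0
  rw [h0, zero_mul, zero_mul] at hux
  exact hk hux.symm

end Jet

noncomputable def jet (F : ℝ × ℝ → ℝ) (p : ℝ × ℝ) : Jet :=
  ⟨pdX F p, pdU F p, pdX (pdU F) p, pdX (pdU (pdU F)) p, pdX (pdX (pdU F)) p⟩

lemma inv9_eq_inv_jet (F : ℝ × ℝ → ℝ) (p : ℝ × ℝ) : inv9 F p = (jet F p).inv := rfl

lemma jet_congr {F G : ℝ × ℝ → ℝ} {p : ℝ × ℝ} (h : F =ᶠ[𝓝 p] G) : jet F p = jet G p := by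
  ext
  exacts [h.pdX_eq, h.pdU.self_of_nhds, h.pdU.pdX_eq, h.pdU.pdU.pdX_eq, h.pdU.pdX.pdX_eq]

section Reparametrization

variable {F : ℝ × ℝ → ℝ} {α β : ℝ → ℝ} {p : ℝ × ℝ}

lemma eventually_differentiableAt_comp_prodMap {g : ℝ × ℝ → ℝ} {n : WithTop ℕ∞}
    (hg : ContDiffAt ℝ n g (α p.1, β p.2)) (hn : n ≠ 0) (hα : ContinuousAt α p.1)
    (hβ : ContinuousAt β p.2) : ∀ᶠ q in 𝓝 p, DifferentiableAt ℝ g (α q.1, β q.2) :=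
  (hα.prodMap hβ).eventually (hg.eventually_differentiableAt hn)

lemma pdU_comp_prodMap_eventuallyEq (hF : ContDiffAt ℝ ∞ F (α p.1, β p.2))
    (hα : ContDiffAt ℝ ∞ α p.1) (hβ : ContDiffAt ℝ ∞ β p.2) :
    pdU (fun q => F (α q.1, β q.2)) =ᶠ[𝓝 p]
      fun q => pdU F (α q.1, β q.2) * deriv β q.2 := by
  filter_upwards [eventually_differentiableAt_comp_prodMap hF (by simp) hα.continuousAt
      hβ.continuousAt,
    continuousAt_fst.eventually (hα.eventually_differentiableAt (by simp)),
    continuousAt_snd.eventually (hβ.eventually_differentiableAt (by simp))] with q hFq hαq hβq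
  exact pdU_comp_prodMap hFq hαq hβq

lemma pdX_pdU_comp_prodMap_eventuallyEq (hF : ContDiffAt ℝ ∞ F (α p.1, β p.2))
    (hα : ContDiffAt ℝ ∞ α p.1) (hβ : ContDiffAt ℝ ∞ β p.2) :
    pdX (pdU (fun q => F (α q.1, β q.2))) =ᶠ[𝓝 p]
      fun q => pdX (pdU F) (α q.1, β q.2) * deriv α q.1 * deriv β q.2 := by
  refine (pdU_comp_prodMap_eventuallyEq hF hα hβ).pdX.trans ?_
  filter_upwards [eventually_differentiableAt_comp_prodMap (hF.pdU (m := ∞) le_rfl)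
      (by simp) hα.continuousAt hβ.continuousAt,
    continuousAt_fst.eventually (hα.eventually_differentiableAt (by simp)),
    continuousAt_snd.eventually (hβ.eventually_differentiableAt (by simp)),
    continuousAt_snd.eventually ((hβ.derivWithin (m := ∞) le_rfl).eventually_differentiableAt
      (by simp))] with q hFuq hαq hβq hβ'q
  simp (disch := fun_prop) only [pdX_mul, pdX_comp_prodMap, pdX_comp_snd]
  ring

lemma pdU_pdU_comp_prodMap_eventuallyEq (hF : ContDiffAt ℝ ∞ F (α p.1, β p.2))
    (hα : ContDiffAt ℝ ∞ α p.1) (hβ : ContDiffAt ℝ ∞ β p.2) :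
    pdU (pdU (fun q => F (α q.1, β q.2))) =ᶠ[𝓝 p]
      fun q => pdU (pdU F) (α q.1, β q.2) * deriv β q.2 * deriv β q.2 +
        pdU F (α q.1, β q.2) * deriv (deriv β) q.2 := by
  refine (pdU_comp_prodMap_eventuallyEq hF hα hβ).pdU.trans ?_
  filter_upwards [eventually_differentiableAt_comp_prodMap (hF.pdU (m := ∞) le_rfl)
      (by simp) hα.continuousAt hβ.continuousAt,
    continuousAt_fst.eventually (hα.eventually_differentiableAt (by simp)),
    continuousAt_snd.eventually (hβ.eventually_differentiableAt (by simp)),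
    continuousAt_snd.eventually ((hβ.derivWithin (m := ∞) le_rfl).eventually_differentiableAt
      (by simp))] with q hFuq hαq hβq hβ'q
  simp (disch := fun_prop) only [pdU_mul, pdU_comp_prodMap, pdU_comp_snd]

lemma jet_comp_prodMap (hF : ContDiffAt ℝ ∞ F (α p.1, β p.2))
    (hα : ContDiffAt ℝ ∞ α p.1) (hβ : ContDiffAt ℝ ∞ β p.2) :
    jet (fun q => F (α q.1, β q.2)) p = (jet F (α p.1, β p.2)).reparam
      (deriv α p.1) (deriv (deriv α) p.1) (deriv β p.2) (deriv (deriv β) p.2) := by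
  have hFu := hF.pdU (m := ∞) le_rfl
  have hα' := hα.derivWithin (m := ∞) le_rfl
  have hβ' := hβ.derivWithin (m := ∞) le_rfl
  have := hF.differentiableAt (by simp)
  have := hFu.differentiableAt (by simp)
  have := (hFu.pdX (m := ∞) le_rfl).differentiableAt (by simp)
  have := (hFu.pdU (m := ∞) le_rfl).differentiableAt (by simp)
  have := hα.differentiableAt (by simp)
  have := hβ.differentiableAt (by simp)
  have := hα'.differentiableAt (by simp)
  have := hβ'.differentiableAt (by simp)
  have := (hβ'.derivWithin (m := ∞) le_rfl).differentiableAt (by simp)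
  ext
  · exact pdX_comp_prodMap ‹_› ‹_› ‹_›
  · exact (pdU_comp_prodMap_eventuallyEq hF hα hβ).self_of_nhds
  · exact (pdX_pdU_comp_prodMap_eventuallyEq hF hα hβ).self_of_nhds
  · rw [jet, (pdU_pdU_comp_prodMap_eventuallyEq hF hα hβ).pdX_eq]
    simp (disch := fun_prop) only [pdX_add, pdX_mul, pdX_comp_prodMap, pdX_comp_snd]
    simp only [jet, Jet.reparam]
    ring
  · rw [jet, (pdX_pdU_comp_prodMap_eventuallyEq hF hα hβ).pdX_eq]
    simp (disch := fun_prop) only [pdX_mul, pdX_comp_prodMap, pdX_comp_snd, pdX_comp_fst]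
    simp only [jet, Jet.reparam]
    ring

end Reparametrization

section SeparableShift

variable {F : ℝ × ℝ → ℝ} {a b : ℝ → ℝ} {p : ℝ × ℝ}

lemma pdU_add_comp_fst_add_comp_snd_eventuallyEq (hF : ContDiffAt ℝ ∞ F p)
    (ha : ContDiffAt ℝ ∞ a p.1) (hb : ContDiffAt ℝ ∞ b p.2) :
    pdU (fun q => F q + a q.1 + b q.2) =ᶠ[𝓝 p] fun q => pdU F q + deriv b q.2 := by
  filter_upwards [hF.eventually_differentiableAt (by simp),
    continuousAt_fst.eventually (ha.eventually_differentiableAt (by simp)),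
    continuousAt_snd.eventually (hb.eventually_differentiableAt (by simp))] with q hFq haq hbq
  simp (disch := fun_prop) only [pdU_add, pdU_comp_fst, pdU_comp_snd, add_zero]

lemma jet_add_comp_fst_add_comp_snd (hF : ContDiffAt ℝ ∞ F p)
    (ha : ContDiffAt ℝ ∞ a p.1) (hb : ContDiffAt ℝ ∞ b p.2) :
    jet (fun q => F q + a q.1 + b q.2) p = (jet F p).shift (deriv a p.1) (deriv b p.2) := by
  have hFu := hF.pdU (m := ∞) le_rfl
  have hb' := hb.derivWithin (m := ∞) le_rfl
  have hu := pdU_add_comp_fst_add_comp_snd_eventuallyEq hF ha hb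
  have hnear := (hFu.eventually_differentiableAt (by simp)).and
    (continuousAt_snd.eventually (hb'.eventually_differentiableAt (by simp)))
  have hux : pdX (pdU (fun q => F q + a q.1 + b q.2)) =ᶠ[𝓝 p] pdX (pdU F) := by
    refine hu.pdX.trans ?_
    filter_upwards [hnear] with q ⟨hFuq, hb'q⟩
    simp (disch := fun_prop) only [pdX_add, pdX_comp_snd, add_zero]
  have huu : pdU (pdU (fun q => F q + a q.1 + b q.2)) =ᶠ[𝓝 p]
      fun q => pdU (pdU F) q + deriv (deriv b) q.2 := by
    refine hu.pdU.trans ?_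
    filter_upwards [hnear] with q ⟨hFuq, hb'q⟩
    simp (disch := fun_prop) only [pdU_add, pdU_comp_snd]
  have := hF.differentiableAt (by simp)
  have := (hFu.pdU (m := ∞) le_rfl).differentiableAt (by simp)
  have := ha.differentiableAt (by simp)
  have := hb.differentiableAt (by simp)
  have := (hb'.derivWithin (m := ∞) le_rfl).differentiableAt (by simp)
  ext
  · simp (disch := fun_prop) only [jet, Jet.shift, pdX_add, pdX_comp_fst, pdX_comp_snd, add_zero]
  · exact hu.self_of_nhds
  · exact hux.self_of_nhds
  · rw [jet, huu.pdX_eq]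
    simp (disch := fun_prop) only [pdX_add, pdX_comp_snd, add_zero]
    rfl
  · exact hux.pdX_eq

end SeparableShift

lemma HasDerivAt.half_log_sq {g : ℝ → ℝ} {g' x : ℝ} (hg : HasDerivAt g g' x) (hx : g x ≠ 0) :
    HasDerivAt (fun y => 1 / 2 * Real.log (g y ^ 2)) (g' / g x) x := by
  refine (((hg.fun_pow 2).log (pow_ne_zero 2 hx)).const_mul (1 / 2)).congr_deriv ?_
  field_simp
  ring

lemma HasDerivAt.neg_half_log_const_mul {g : ℝ → ℝ} {g' x : ℝ} (c : ℝ) (hg : HasDerivAt g g' x)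
    (hx : c * g x ≠ 0) :
    HasDerivAt (fun y => -(1 / 2 * Real.log (c * g y))) (-(g' / (2 * g x))) x := by
  refine (((hg.const_mul c).log hx).const_mul (1 / 2)).fun_neg.congr_deriv ?_
  field_simp [left_ne_zero_of_mul hx]

theorem stmt_9_general (Ω : Set (ℝ × ℝ)) (hΩ : IsOpen Ω) (x₀ u₀ : ℝ) (hmem : (x₀, u₀) ∈ Ω)
    (F : ℝ × ℝ → ℝ) (hF : ContDiffOn ℝ (⊤ : ℕ∞) F Ω)
    (hFxu : pdX (pdU F) (x₀, u₀) ≠ 0)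
    (α β : ℝ → ℝ) (hα : ContDiffAt ℝ (⊤ : ℕ∞) α x₀) (hβ : ContDiffAt ℝ (⊤ : ℕ∞) β u₀)
    (C₁ : ℝ)
    (hpos : ∀ᶠ p : ℝ × ℝ in nhds (x₀, u₀), 0 < C₁ * deriv β p.2 / (deriv α p.1) ^ 2)
    (Ft : ℝ × ℝ → ℝ) (hFt : ContDiffAt ℝ (⊤ : ℕ∞) Ft (α x₀, β u₀))
    (hrel : ∀ᶠ p : ℝ × ℝ in nhds (x₀, u₀),
      Ft (α p.1, β p.2) = F p - (1 / 2) * Real.log (C₁ * deriv β p.2 / (deriv α p.1) ^ 2)) :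
    pdX (pdU Ft) (α x₀, β u₀) ≠ 0 ∧
      inv9 Ft (α x₀, β u₀) = inv9 F (x₀, u₀) := by
  obtain ⟨hCβ, hA2⟩ := div_ne_zero_iff.mp hpos.self_of_nhds.ne'
  have hA : deriv α x₀ ≠ 0 := (pow_ne_zero_iff two_ne_zero).mp hA2
  have hB : deriv β u₀ ≠ 0 := right_ne_zero_of_mul hCβ
  set a : ℝ → ℝ := fun x => 1 / 2 * Real.log (deriv α x ^ 2)
  set b : ℝ → ℝ := fun u => -(1 / 2 * Real.log (C₁ * deriv β u))
  have hsplit : (fun p : ℝ × ℝ => Ft (α p.1, β p.2)) =ᶠ[𝓝 (x₀, u₀)]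
      fun p => F p + a p.1 + b p.2 := by
    filter_upwards [hrel, hpos] with p hp hp'
    obtain ⟨h₁, h₂⟩ := div_ne_zero_iff.mp hp'.ne'
    rw [hp, Real.log_div h₁ h₂]
    ring
  have hdα := hα.derivWithin (m := ∞) le_rfl
  have hdβ := hβ.derivWithin (m := ∞) le_rfl
  have ha := (hdα.differentiableAt (by simp)).hasDerivAt.half_log_sq hA
  have hb := (hdβ.differentiableAt (by simp)).hasDerivAt.neg_half_log_const_mul C₁ hCβ
  have hjet := (jet_comp_prodMap hFt hα hβ).symm.trans <| (jet_congr hsplit).trans <|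
    jet_add_comp_fst_add_comp_snd (hF.contDiffAt (hΩ.mem_nhds hmem))
      (contDiffAt_const.mul ((hdα.pow 2).log hA2))
      ((contDiffAt_const.mul ((contDiffAt_const.mul hdβ).log hCβ)).neg)
  rw [ha.deriv, hb.deriv] at hjet
  refine ⟨Jet.ux_ne_zero_of_reparam_eq_shift hjet hFxu, ?_⟩
  rw [inv9_eq_inv_jet, inv9_eq_inv_jet]
  exact Jet.inv_eq_of_reparam_eq_shift hA hB hjet

/-- Invariance of `I` under the Lie pseudogroup action
`(x, u, F) ↦ (α(x), β(u), F∘(α⁻¹,β⁻¹) − ½ ln(C₁β'/α'²))`. -/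
theorem stmt_9 (Ω : Set (ℝ × ℝ)) (hΩ : IsOpen Ω) (x₀ u₀ : ℝ) (hmem : (x₀, u₀) ∈ Ω)
    (F : ℝ × ℝ → ℝ) (hF : ContDiffOn ℝ (⊤ : ℕ∞) F Ω)
    (hFxu : pdX (pdU F) (x₀, u₀) ≠ 0)
    (α β : ℝ → ℝ) (hα : ContDiffAt ℝ (⊤ : ℕ∞) α x₀) (hβ : ContDiffAt ℝ (⊤ : ℕ∞) β u₀)
    (hα' : deriv α x₀ ≠ 0) (hβ' : deriv β u₀ ≠ 0)
    (C₁ : ℝ)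
    (hpos : ∀ᶠ p : ℝ × ℝ in nhds (x₀, u₀), 0 < C₁ * deriv β p.2 / (deriv α p.1) ^ 2)
    (Ft : ℝ × ℝ → ℝ) (hFt : ContDiffAt ℝ (⊤ : ℕ∞) Ft (α x₀, β u₀))
    (hrel : ∀ᶠ p : ℝ × ℝ in nhds (x₀, u₀),
      Ft (α p.1, β p.2) = F p - (1 / 2) * Real.log (C₁ * deriv β p.2 / (deriv α p.1) ^ 2)) :
    pdX (pdU Ft) (α x₀, β u₀) ≠ 0 ∧
      inv9 Ft (α x₀, β u₀) = inv9 F (x₀, u₀) :=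
  stmt_9_general Ω hΩ x₀ u₀ hmem F hF hFxu α β hα hβ C₁ hpos Ft hFt hrel
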